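/- arXiv:2205.14116 — 5 statements merged into one kernel-verified Lean document; each statement's English description precedes it below -/
import Mathlib

section
/- (Lemma 2(a)) Let m ∈ ℕ and let α ∈ ℝ with α ≤ 1/2. If p, q ∈ [0,1] satisfy B(m; 2m+1, p) = α and B(m+1; 2m+3, q) = α, then q ≤ p. That is, for α ≤ 1/2 the robustness threshold for odd ensemble sizes is nonincreasing: p*_{2m+3,α} ≤ p*_{2m+1,α}. -/
/-- Binomial cumulative distribution function:
`B(k; N, p) = ∑_{i=0}^{k} (N choose i) p^i (1-p)^(N-i)`. -/
noncomputable def binCdf (k N : ℕ) (p : ℝ) : ℝ :=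
  ∑ i ∈ Finset.range (k + 1), (N.choose i : ℝ) * p ^ i * (1 - p) ^ (N - i)

/-- `g_N(p) = B(⌊N/2⌋; N, p)`. -/
noncomputable def gN (N : ℕ) (p : ℝ) : ℝ := binCdf (N / 2) N p

lemma binCdf_succ_k (k N : ℕ) (p : ℝ) :
    binCdf (k+1) N p = binCdf k N p + (N.choose (k+1) : ℝ) * p^(k+1) * (1-p)^(N-(k+1)) := by
  simp [binCdf, Finset.sum_range_succ]

lemma binCdf_succ_N (k N : ℕ) (hk : k ≤ N) (p : ℝ) :
    binCdf k (N+1) p = binCdf k N p - (N.choose k : ℝ) * p^(k+1) * (1-p)^(N-k) := by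
  induction k with
  | zero => simp [binCdf, pow_succ]; ring
  | succ k ih =>
    have hk' : k ≤ N := by omega
    rw [binCdf_succ_k k (N+1) p, binCdf_succ_k k N p, ih hk']
    have e1 : (N+1) - (k+1) = N - k := by omega
    have e2 : N - k = (N - (k+1)) + 1 := by omega
    have e3 : ((N+1).choose (k+1) : ℝ) = (N.choose k : ℝ) + (N.choose (k+1) : ℝ) := by
      rw [Nat.choose_succ_succ]; push_cast; ring
    rw [e1, e3, e2, pow_succ]
    ring

lemma key_identity (m : ℕ) (p : ℝ) :
    binCdf (m+1) (2*m+3) p =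
      binCdf m (2*m+1) p + ((2*m+1).choose m : ℝ) * p^(m+1) * (1-p)^(m+1) * (1 - 2*p) := by
  have s1 : binCdf (m+1) (2*m+3) p
      = binCdf m (2*m+3) p + ((2*m+3).choose (m+1) : ℝ) * p^(m+1) * (1-p)^(m+2) := by
    have := binCdf_succ_k m (2*m+3) p
    rwa [show (2*m+3) - (m+1) = m+2 by omega] at this
  have s2 : binCdf m (2*m+3) p
      = binCdf m (2*m+2) p - ((2*m+2).choose m : ℝ) * p^(m+1) * (1-p)^(m+2) := by
    have := binCdf_succ_N m (2*m+2) (by omega) p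
    rw [show (2*m+2) - m = m+2 by omega] at this
    rw [show 2*m+3 = (2*m+2)+1 by omega]
    exact this
  have s3 : binCdf m (2*m+2) p
      = binCdf m (2*m+1) p - ((2*m+1).choose m : ℝ) * p^(m+1) * (1-p)^(m+1) := by
    have := binCdf_succ_N m (2*m+1) (by omega) p
    rw [show (2*m+1) - m = m+1 by omega] at this
    rw [show 2*m+2 = (2*m+1)+1 by omega]
    exact this
  have c1 : (2*m+3).choose (m+1) = (2*m+2).choose m + 2 * (2*m+1).choose m := by
    rw [show 2*m+3 = (2*m+2)+1 by omega, Nat.choose_succ_succ]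
    rw [show 2*m+2 = (2*m+1)+1 by omega, Nat.choose_succ_succ]
    have : (2*m+1).choose (m+1) = (2*m+1).choose m := by
      rw [← Nat.choose_symm (by omega : m+1 ≤ 2*m+1)]
      congr 1; omega
    rw [this]; ring
  rw [s1, s2, s3, c1]
  push_cast
  rw [show (m+2) = (m+1)+1 by omega, pow_succ]
  ring

lemma binCdf_hasDerivAt (k N : ℕ) (hk : k < N) (x : ℝ) :
    HasDerivAt (fun p => binCdf k N p)
      (-(((k+1) * N.choose (k+1) : ℕ) : ℝ) * x^k * (1-x)^(N-(k+1))) x := by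
  induction k with
  | zero =>
    have h0 : (fun p : ℝ => binCdf 0 N p) = fun p => (1-p)^N := by
      funext p; simp [binCdf]
    rw [h0]
    have hinner : HasDerivAt (fun p : ℝ => 1 - p) (-1) x := (hasDerivAt_id x).const_sub 1
    have := hinner.pow N
    refine this.congr_deriv (Eq.symm ?_)
    simp [Nat.choose_one_right]
  | succ k ih =>
    have hk' : k < N := by omega
    have ih' := ih hk'
    have hfun : (fun p : ℝ => binCdf (k+1) N p)
        = fun p => binCdf k N p + (N.choose (k+1) : ℝ) * (p^(k+1) * (1-p)^(N-(k+1))) := by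
      funext p; rw [binCdf_succ_k k N p]; ring
    rw [hfun]
    have h1 : HasDerivAt (fun p : ℝ => p^(k+1)) ((k+1 : ℕ) * x^k) x := by
      simpa using hasDerivAt_pow (k+1) x
    have h2 : HasDerivAt (fun p : ℝ => (1-p)^(N-(k+1)))
        (((N-(k+1) : ℕ) : ℝ) * (1-x)^(N-(k+1)-1) * (-1)) x :=
      ((hasDerivAt_id x).const_sub 1).pow (N-(k+1))
    have h3 := ((h1.mul h2).const_mul ((N.choose (k+1) : ℝ)))
    have h4 := ih'.add h3
    refine h4.congr_deriv (Eq.symm ?_)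
    have e1 : N - (k+1) - 1 = N - (k+2) := by omega
    have e2 : N - (k+1) = (N - (k+2)) + 1 := by omega
    have hc : ((N.choose (k+2) * (k+2) : ℕ) : ℝ) = ((N.choose (k+1) * (N - (k+1)) : ℕ) : ℝ) := by
      exact_mod_cast congrArg (Nat.cast (R := ℝ)) (Nat.choose_succ_right_eq N (k+1))
    have e4 : ((N - (k+1) : ℕ) : ℝ) = ((N - (k+2) : ℕ) : ℝ) + 1 := by
      exact_mod_cast congrArg (Nat.cast (R := ℝ)) e2
    rw [e1, e2]
    push_cast at hc ⊢
    rw [e4] at hc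
    simp only [pow_succ]
    linear_combination (-(x^(k+1) * (1-x)^(N-(k+2)))) * hc

lemma binCdf_strictAntiOn (m : ℕ) :
    StrictAntiOn (fun p => binCdf m (2*m+1) p) (Set.Icc (0:ℝ) 1) := by
  apply strictAntiOn_of_deriv_neg (convex_Icc 0 1)
  · apply Continuous.continuousOn
    unfold binCdf
    apply continuous_finset_sum
    intro i _
    fun_prop
  · intro x hx
    rw [interior_Icc] at hx
    have h := binCdf_hasDerivAt m (2*m+1) (by omega) x
    rw [h.deriv]
    rw [show (2*m+1) - (m+1) = m by omega]
    have hC : (0:ℝ) < (((m+1) * (2*m+1).choose (m+1) : ℕ) : ℝ) := by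
      have : 0 < (m+1) * (2*m+1).choose (m+1) :=
        Nat.mul_pos (by omega) (Nat.choose_pos (by omega))
      exact_mod_cast this
    have hx1 : (0:ℝ) < x ^ m := pow_pos hx.1 m
    have hx2 : (0:ℝ) < (1-x) ^ m := pow_pos (by linarith [hx.2]) m
    rw [neg_mul, neg_mul, neg_lt_zero]
    exact mul_pos (mul_pos hC hx1) hx2

lemma binCdf_half (m : ℕ) : binCdf m (2*m+1) (1/2 : ℝ) = 1/2 := by
  unfold binCdf
  have key : ∀ i ∈ Finset.range (m+1),
      ((2*m+1).choose i : ℝ) * (1/2)^i * (1 - 1/2)^(2*m+1-i)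
        = ((2*m+1).choose i : ℝ) * (1/2)^(2*m+1) := by
    intro i hi
    rw [Finset.mem_range] at hi
    rw [show (1 - (1/2:ℝ)) = 1/2 by norm_num, mul_assoc, ← pow_add,
      show i + (2*m+1-i) = 2*m+1 by omega]
  rw [Finset.sum_congr rfl key, ← Finset.sum_mul, ← Nat.cast_sum,
    Nat.sum_range_choose_halfway m]
  push_cast
  rw [show (4:ℝ) = 2^2 by norm_num, ← pow_mul]
  rw [div_pow, one_pow, pow_succ]
  field_simp

lemma half_le_of_binCdf_le_half (m : ℕ) {p : ℝ} (hp : p ∈ Set.Icc (0:ℝ) 1)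
    (h : binCdf m (2*m+1) p ≤ 1/2) : 1/2 ≤ p := by
  by_contra hlt
  push_neg at hlt
  have h2 : (1/2:ℝ) ∈ Set.Icc (0:ℝ) 1 := by norm_num
  have := binCdf_strictAntiOn m hp h2 hlt
  simp only at this
  rw [binCdf_half] at this
  linarith

theorem threshold_antitone_odd (m : ℕ) (α : ℝ) (hα : α ≤ 1 / 2)
    (p q : ℝ) (hp : p ∈ Set.Icc (0 : ℝ) 1) (hq : q ∈ Set.Icc (0 : ℝ) 1)
    (hP : binCdf m (2 * m + 1) p = α)
    (hQ : binCdf (m + 1) (2 * m + 3) q = α) :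
    q ≤ p := by
  have hphalf : 1/2 ≤ p := half_le_of_binCdf_le_half m hp (by rw [hP]; exact hα)
  have hQ' : binCdf (m+1) (2*(m+1)+1) q = α := by
    rw [show 2*(m+1)+1 = 2*m+3 by omega]; exact hQ
  have hkey : binCdf (m+1) (2*m+3) p ≤ α := by
    rw [key_identity m p, hP]
    have h1 : (0:ℝ) ≤ ((2*m+1).choose m : ℝ) * p^(m+1) * (1-p)^(m+1) := by
      have h0p : (0:ℝ) ≤ p := hp.1
      have h1p : (0:ℝ) ≤ 1 - p := by linarith [hp.2]
      exact mul_nonneg (mul_nonneg (by positivity) (pow_nonneg h0p _)) (pow_nonneg h1p _)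
    have h2 : ((2*m+1).choose m : ℝ) * p^(m+1) * (1-p)^(m+1) * (1 - 2*p) ≤ 0 :=
      mul_nonpos_of_nonneg_of_nonpos h1 (by linarith)
    linarith
  by_contra hlt
  push_neg at hlt
  have hs := binCdf_strictAntiOn (m+1) hp hq hlt
  simp only at hs
  rw [hQ'] at hs
  rw [show 2*(m+1)+1 = 2*m+3 by omega] at hs
  linarith
end

section
/- (Lemma 2(c)) Let m ≥ 1 be an integer and let α ∈ ℝ. If p, q ∈ [0,1] satisfy B(m; 2m, p) = α and B(m; 2m+1, q) = α, then q ≤ p. That is, for every α the robustness threshold satisfies p*_{2m+1,α} ≤ p*_{2m,α}. -/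
/-- auxiliary telescoping term -/
noncomputable def tAux (n : ℕ) (x : ℝ) : ℕ → ℝ
  | 0 => 0
  | (i + 1) => (n.choose i : ℝ) * x ^ (i + 1) * (1 - x) ^ (n - i)

/-- auxiliary telescoping term for the derivative -/
noncomputable def wAux (n : ℕ) (x : ℝ) (j : ℕ) : ℝ :=
  ((j * n.choose j : ℕ) : ℝ) * x ^ (j - 1) * (1 - x) ^ (n - j)

lemma binCdf_succ (k n : ℕ) (hk : k ≤ n) (x : ℝ) :
    binCdf k (n + 1) x = binCdf k n x - (n.choose k : ℝ) * x ^ (k + 1) * (1 - x) ^ (n - k) := by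
  have key : binCdf k n x - binCdf k (n + 1) x
      = (n.choose k : ℝ) * x ^ (k + 1) * (1 - x) ^ (n - k) := by
    unfold binCdf
    rw [← Finset.sum_sub_distrib]
    have hterm : ∀ i ∈ Finset.range (k + 1),
        (n.choose i : ℝ) * x ^ i * (1 - x) ^ (n - i)
          - ((n + 1).choose i : ℝ) * x ^ i * (1 - x) ^ (n + 1 - i)
        = tAux n x (i + 1) - tAux n x i := by
      intro i hi
      have hin : i ≤ n := le_trans (Nat.lt_succ_iff.mp (Finset.mem_range.mp hi)) hk
      match i with
      | 0 =>
        simp only [tAux, Nat.choose_zero_right, Nat.cast_one, pow_zero, Nat.sub_zero,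
          Nat.add_sub_cancel]
        rw [pow_succ']
        ring
      | (j + 1) =>
        have h1 : (n + 1).choose (j + 1) = n.choose j + n.choose (j + 1) :=
          Nat.choose_succ_succ n j
        have h2 : n + 1 - (j + 1) = n - j := by omega
        have h3 : n - j = (n - (j + 1)) + 1 := by omega
        simp only [tAux, h1, h2, h3, Nat.cast_add, pow_succ]
        ring
    rw [Finset.sum_congr rfl hterm, Finset.sum_range_sub (tAux n x)]
    simp [tAux]
  linarith

lemma hasDerivAt_binCdf (k n : ℕ) (hk : k < n) (x : ℝ) :
    HasDerivAt (binCdf k n)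
      (-((((n - k) * n.choose k : ℕ) : ℝ) * x ^ k * (1 - x) ^ (n - k - 1))) x := by
  have hterm : ∀ i ∈ Finset.range (k + 1),
      HasDerivAt (fun y : ℝ => (n.choose i : ℝ) * y ^ i * (1 - y) ^ (n - i))
        (((i * n.choose i : ℕ) : ℝ) * x ^ (i - 1) * (1 - x) ^ (n - i)
          - (((i + 1) * n.choose (i + 1) : ℕ) : ℝ) * x ^ i * (1 - x) ^ (n - (i + 1))) x := by
    intro i hi
    have hin : i < n := lt_of_le_of_lt (Nat.lt_succ_iff.mp (Finset.mem_range.mp hi)) hk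
    have h1 : HasDerivAt (fun y : ℝ => (n.choose i : ℝ) * y ^ i)
        ((n.choose i : ℝ) * ((i : ℝ) * x ^ (i - 1))) x := (hasDerivAt_pow i x).const_mul _
    have h2 : HasDerivAt (fun y : ℝ => (1 - y) ^ (n - i))
        (((n - i : ℕ) : ℝ) * (1 - x) ^ (n - i - 1) * (-1)) x :=
      ((hasDerivAt_id x).const_sub 1).pow (n - i)
    have h := h1.fun_mul h2
    refine h.congr_deriv ?_
    have hcc : ((i + 1) * n.choose (i + 1) : ℕ) = (n.choose i * (n - i) : ℕ) := by
      rw [mul_comm]; exact Nat.choose_succ_right_eq n i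
    have hsub : n - (i + 1) = n - i - 1 := by omega
    rw [hcc, hsub]
    push_cast
    ring
  have hsum := HasDerivAt.fun_sum hterm
  have heq : binCdf k n = fun y : ℝ =>
      ∑ i ∈ Finset.range (k + 1), (n.choose i : ℝ) * y ^ i * (1 - y) ^ (n - i) := rfl
  rw [heq]
  refine hsum.congr_deriv ?_
  have hcong : ∀ i ∈ Finset.range (k + 1),
      ((i * n.choose i : ℕ) : ℝ) * x ^ (i - 1) * (1 - x) ^ (n - i)
        - (((i + 1) * n.choose (i + 1) : ℕ) : ℝ) * x ^ i * (1 - x) ^ (n - (i + 1))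
      = wAux n x i - wAux n x (i + 1) := by
    intro i _
    simp [wAux]
  rw [Finset.sum_congr rfl hcong, Finset.sum_range_sub' (wAux n x)]
  simp only [wAux]
  have hcc : ((k + 1) * n.choose (k + 1) : ℕ) = (n.choose k * (n - k) : ℕ) := by
    rw [mul_comm]; exact Nat.choose_succ_right_eq n k
  simp only [Nat.zero_eq, Nat.zero_mul, Nat.cast_zero, zero_mul, hcc]
  have hsub : n - (k + 1) = n - k - 1 := by omega
  rw [hsub]
  push_cast
  ring

lemma binCdf_strictAntiOn_s12 (k n : ℕ) (hk : k < n) :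
    StrictAntiOn (binCdf k n) (Set.Icc 0 1) := by
  apply strictAntiOn_of_deriv_neg (convex_Icc 0 1)
  · apply Continuous.continuousOn
    unfold binCdf
    continuity
  · intro x hx
    rw [interior_Icc] at hx
    rw [(hasDerivAt_binCdf k n hk x).deriv]
    have h1 : (0 : ℝ) < x := hx.1
    have h2 : (0 : ℝ) < 1 - x := by linarith [hx.2]
    have hc : 0 < ((n - k) * n.choose k : ℕ) :=
      Nat.mul_pos (by omega) (Nat.choose_pos hk.le)
    have hc' : (0 : ℝ) < (((n - k) * n.choose k : ℕ) : ℝ) := by exact_mod_cast hc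
    have := mul_pos (mul_pos hc' (pow_pos h1 k)) (pow_pos h2 (n - k - 1))
    linarith

theorem threshold_odd_le_even (m : ℕ) (hm : 1 ≤ m) (α : ℝ)
    (p q : ℝ) (hp : p ∈ Set.Icc (0 : ℝ) 1) (hq : q ∈ Set.Icc (0 : ℝ) 1)
    (hP : binCdf m (2 * m) p = α)
    (hQ : binCdf m (2 * m + 1) q = α) :
    q ≤ p := by
  by_contra h
  push_neg at h
  have hid := binCdf_succ m (2 * m) (by omega) p
  have hle : binCdf m (2 * m + 1) p ≤ α := by
    rw [hid, hP]
    have h1 : (0 : ℝ) ≤ ((2 * m).choose m : ℝ) * p ^ (m + 1) * (1 - p) ^ (2 * m - m) := by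
      apply mul_nonneg (mul_nonneg (by positivity) (pow_nonneg hp.1 _))
      exact pow_nonneg (by linarith [hp.2]) _
    linarith
  have hanti := binCdf_strictAntiOn_s12 m (2 * m + 1) (by omega)
  have hlt := hanti hp hq h
  rw [hQ] at hlt
  linarith
end

section
/- For every m ∈ ℕ and every real p ∈ [0,1]: B(m+1; 2m+3, p) − B(m; 2m+1, p) = p·(1 − 2p) · (2m+1 choose m) · p^m (1−p)^{m+1}. In particular, this difference is nonpositive whenever p ≥ 1/2. -/
/-!
Going from `n` to `n + 1` trials, the event "at most `k` successes" loses exactly the runs with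
`k` successes among the first `n` trials followed by a success, so
`B(k; n+1, p) = B(k; n, p) - C(n, k) p^(k+1) (1-p)^(n-k)`. Applying this twice (`2m+1 → 2m+3`),
adding the single term that raises the threshold from `m` to `m + 1`, and using
`C(2m+1, m+1) = C(2m+1, m)` and `C(2m+2, m+1) = 2 C(2m+1, m)`, everything cancels except
`p (1 - 2p) C(2m+1, m) p^m (1-p)^(m+1)`.
-/

lemma binCdf_succ_threshold (k j : ℕ) (p : ℝ) :
    binCdf (k + 1) (k + 1 + j) p =
      binCdf k (k + 1 + j) p + ((k + 1 + j).choose (k + 1) : ℝ) * p ^ (k + 1) * (1 - p) ^ j := by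
  rw [binCdf, Finset.sum_range_succ, Nat.add_sub_cancel_left, binCdf]

/-- The trial count is written as `k + j` so that no natural subtraction occurs. -/
lemma binCdf_succ_trials (k j : ℕ) (p : ℝ) :
    binCdf k (k + j + 1) p =
      binCdf k (k + j) p - ((k + j).choose k : ℝ) * p ^ (k + 1) * (1 - p) ^ j := by
  induction k generalizing j with
  | zero =>
    simp only [binCdf, zero_add, Finset.sum_range_one, Nat.choose_zero_right, Nat.sub_zero]
    ring
  | succ k ih =>
    have hN : k + 1 + j + 1 = k + 1 + (j + 1) := by ring
    have hN' : k + 1 + (j + 1) = k + (j + 1) + 1 := by ring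
    rw [hN, binCdf_succ_threshold, binCdf_succ_threshold, hN', ih, Nat.choose_succ_succ,
      show k + (j + 1) = k + 1 + j by ring]
    push_cast
    ring

lemma binCdf_two_mul_add_three_sub (m : ℕ) (p : ℝ) :
    binCdf (m + 1) (2 * m + 3) p - binCdf m (2 * m + 1) p =
      p * (1 - 2 * p) * ((2 * m + 1).choose m : ℝ) * p ^ m * (1 - p) ^ (m + 1) := by
  have e3 := binCdf_succ_trials (m + 1) (m + 1) p
  rw [show m + 1 + (m + 1) + 1 = 2 * m + 3 by ring, show m + 1 + (m + 1) = 2 * m + 2 by ring] at e3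
  have e2 := binCdf_succ_trials (m + 1) m p
  rw [show m + 1 + m + 1 = 2 * m + 2 by ring, show m + 1 + m = 2 * m + 1 by ring] at e2
  have e1 := binCdf_succ_threshold m m p
  rw [show m + 1 + m = 2 * m + 1 by ring] at e1
  have hcentral : (2 * m + 2).choose (m + 1) = 2 * (2 * m + 1).choose m := by
    rw [Nat.choose_succ_succ, Nat.choose_symm_half]; ring
  rw [e3, e2, e1, hcentral, Nat.choose_symm_half]
  push_cast
  ring

theorem binCdf_odd_diff_general (m : ℕ) (p : ℝ) (hp1 : p ≤ 1) :
    binCdf (m + 1) (2 * m + 3) p - binCdf m (2 * m + 1) p =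
        p * (1 - 2 * p) * ((2 * m + 1).choose m : ℝ) * p ^ m * (1 - p) ^ (m + 1) ∧
      (1 / 2 ≤ p →
        binCdf (m + 1) (2 * m + 3) p - binCdf m (2 * m + 1) p ≤ 0) := by
  refine ⟨binCdf_two_mul_add_three_sub m p, fun hp => ?_⟩
  have hfactor : p * (1 - 2 * p) ≤ 0 := mul_nonpos_of_nonneg_of_nonpos (by linarith) (by linarith)
  have hq : 0 ≤ 1 - p := by linarith
  calc _ = p * (1 - 2 * p) * (((2 * m + 1).choose m : ℝ) * p ^ m * (1 - p) ^ (m + 1)) := by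
          rw [binCdf_two_mul_add_three_sub]; ring
    _ ≤ 0 := mul_nonpos_of_nonpos_of_nonneg hfactor (by positivity)

theorem binCdf_odd_diff (m : ℕ) (p : ℝ) (hp0 : 0 ≤ p) (hp1 : p ≤ 1) :
    binCdf (m + 1) (2 * m + 3) p - binCdf m (2 * m + 1) p =
        p * (1 - 2 * p) * ((2 * m + 1).choose m : ℝ) * p ^ m * (1 - p) ^ (m + 1) ∧
      (1 / 2 ≤ p →
        binCdf (m + 1) (2 * m + 3) p - binCdf m (2 * m + 1) p ≤ 0) :=
  binCdf_odd_diff_general m p hp1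
end

section
/- For every integer m ≥ 1 and every real p ∈ [0,1]: B(m+1; 2m+2, p) − B(m; 2m, p) = (2m choose m+1) · p^{m+1} (1−p)^{m+1} − (2m choose m) · p^{m+2} (1−p)^{m}. -/
/-! Adding a trial can only lower the CDF, and only through the outcomes that had exactly `k`
successes and then succeed once more:
`B(k; n+1, p) = B(k; n, p) - (n choose k) p^(k+1) (1-p)^(n-k)`.
Expanding `B(m+1; 2m+2, p)` down to `B(m; 2m, p)` by one step in `k` and two steps in `n`, the
identity reduces to Pascal's rule for the coefficients. -/

lemma binCdf_succ_left (k N : ℕ) (p : ℝ) :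
    binCdf (k + 1) N p =
      binCdf k N p + (N.choose (k + 1) : ℝ) * p ^ (k + 1) * (1 - p) ^ (N - (k + 1)) :=
  Finset.sum_range_succ _ _

-- For `n ≤ k` the subtractions truncate and the identity fails for the powers alone,
-- but then the coefficient vanishes.
lemma choose_succ_mul_pow_sub (n k : ℕ) (x : ℝ) :
    (n.choose (k + 1) : ℝ) * x ^ (n - k) = (n.choose (k + 1) : ℝ) * x ^ (n - (k + 1)) * x := by
  rcases lt_or_ge k n with hkn | hnk
  · rw [mul_assoc, ← pow_succ, show n - (k + 1) + 1 = n - k by omega]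
  · simp [Nat.choose_eq_zero_of_lt (Nat.lt_succ_of_le hnk)]

lemma binCdf_succ_right (k n : ℕ) (p : ℝ) :
    binCdf k (n + 1) p = binCdf k n p - (n.choose k : ℝ) * p ^ (k + 1) * (1 - p) ^ (n - k) := by
  induction k with
  | zero =>
    simp only [binCdf, zero_add, Finset.range_one, Finset.sum_singleton, Nat.choose_zero_right,
      Nat.cast_one, pow_zero, one_mul, tsub_zero, pow_succ]
    ring
  | succ k ih =>
    rw [binCdf_succ_left k (n + 1), binCdf_succ_left k n, ih, Nat.choose_succ_succ,
      Nat.add_sub_add_right]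
    push_cast
    linear_combination p ^ (k + 1) * choose_succ_mul_pow_sub n k (1 - p)

theorem binCdf_even_diff_general (m : ℕ) (p : ℝ) :
    binCdf (m + 1) (2 * m + 2) p - binCdf m (2 * m) p =
      ((2 * m).choose (m + 1) : ℝ) * p ^ (m + 1) * (1 - p) ^ (m + 1) -
        ((2 * m).choose m : ℝ) * p ^ (m + 2) * (1 - p) ^ m := by
  have step_k := binCdf_succ_left m (2 * m + 2) p
  have step_n₁ := binCdf_succ_right m (2 * m + 1) p
  have step_n₀ := binCdf_succ_right m (2 * m) p
  rw [show 2 * m + 2 - (m + 1) = m + 1 by omega] at step_k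
  rw [show 2 * m + 1 - m = m + 1 by omega] at step_n₁
  rw [show 2 * m - m = m by omega] at step_n₀
  have pascal₁ : ((2 * m + 2).choose (m + 1) : ℝ) =
      (2 * m + 1).choose m + (2 * m + 1).choose (m + 1) := by
    exact_mod_cast Nat.choose_succ_succ (2 * m + 1) m
  have pascal₀ : ((2 * m + 1).choose (m + 1) : ℝ) =
      (2 * m).choose m + (2 * m).choose (m + 1) := by
    exact_mod_cast Nat.choose_succ_succ (2 * m) m
  linear_combination
    step_k + step_n₁ + step_n₀ + p ^ (m + 1) * (1 - p) ^ (m + 1) * (pascal₁ + pascal₀)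

theorem binCdf_even_diff (m : ℕ) (hm : 1 ≤ m) (p : ℝ) (hp0 : 0 ≤ p) (hp1 : p ≤ 1) :
    binCdf (m + 1) (2 * m + 2) p - binCdf m (2 * m) p =
      ((2 * m).choose (m + 1) : ℝ) * p ^ (m + 1) * (1 - p) ^ (m + 1) -
        ((2 * m).choose m : ℝ) * p ^ (m + 2) * (1 - p) ^ m :=
  binCdf_even_diff_general m p
end

section
/- (Proposition 3) Let N ≥ 2 be an even integer, let α ∈ ℝ with 0 ≤ α ≤ 1/2, and let p ∈ [0,1] satisfy g_N(p) = B(N/2; N, p) ≤ α. Then for every integer M ≥ N, the Binomial(M, p) majority-vote tail probability satisfies ∑_{i=0}^{M} [2i ≥ M] · (M choose i) p^i (1−p)^{M−i} ≥ 1 − α. That is, a counterfactual explanation that is robust at tolerance α for an ensemble of even size N is robust at tolerance α for any ensemble of larger size. -/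
open Finset

noncomputable def binomTerm (p : ℝ) (m i : ℕ) : ℝ :=
  (m.choose i : ℝ) * p ^ i * (1 - p) ^ (m - i)

noncomputable def binomTail (p : ℝ) (t m : ℕ) : ℝ :=
  ∑ i ∈ Ico t (m + 1), binomTerm p m i

section BinomTerm

variable {p : ℝ} {m i : ℕ}

lemma binomTerm_nonneg (hp0 : 0 ≤ p) (hp1 : p ≤ 1) : 0 ≤ binomTerm p m i := by
  have : 0 ≤ 1 - p := by linarith
  unfold binomTerm; positivity

lemma binomTerm_eq_zero_of_lt (h : m < i) : binomTerm p m i = 0 := by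
  simp [binomTerm, Nat.choose_eq_zero_of_lt h]

lemma binomTerm_succ_succ :
    binomTerm p (m + 1) (i + 1) = p * binomTerm p m i + (1 - p) * binomTerm p m (i + 1) := by
  rcases lt_trichotomy i m with h | rfl | h
  · obtain ⟨k, rfl⟩ := Nat.exists_eq_add_of_lt h
    simp only [binomTerm, Nat.choose_succ_succ', Nat.cast_add,
      show i + k + 1 + 1 - (i + 1) = k + 1 by omega, show i + k + 1 - i = k + 1 by omega,
      show i + k + 1 - (i + 1) = k by omega]
    ring
  · simp [binomTerm, pow_succ, mul_comm]
  · simp [binomTerm_eq_zero_of_lt h, binomTerm_eq_zero_of_lt (Nat.lt_succ_of_lt h),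
      binomTerm_eq_zero_of_lt (Nat.succ_lt_succ h)]

lemma binomTerm_sub_eq (h : i ≤ m) : binomTerm p m (m - i) = binomTerm (1 - p) m i := by
  simp only [binomTerm, Nat.choose_symm h, Nat.sub_sub_self h, sub_sub_cancel]
  ring

lemma binomTerm_one_sub_le (hp0 : 0 ≤ p) (hp : p ≤ 1 / 2) (h : 2 * i ≤ m) :
    binomTerm (1 - p) m i ≤ binomTerm p m i := by
  obtain ⟨k, rfl⟩ := Nat.exists_eq_add_of_le h
  have hq : 0 ≤ 1 - p := by linarith
  have hpow : p ^ k ≤ (1 - p) ^ k := pow_le_pow_left₀ hp0 (by linarith) k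
  simp only [binomTerm, sub_sub_cancel, show 2 * i + k - i = i + k by omega, pow_add]
  have hC : 0 ≤ ((2 * i + k).choose i : ℝ) * (1 - p) ^ i * p ^ i := by positivity
  nlinarith [mul_le_mul_of_nonneg_left hpow hC]

lemma sum_range_binomTerm : ∑ i ∈ range (m + 1), binomTerm p m i = 1 := by
  have h := add_pow p (1 - p) m
  rw [add_sub_cancel, one_pow] at h
  rw [h]
  exact sum_congr rfl fun i _ => by unfold binomTerm; ring

end BinomTerm

section BinomTail

variable {p : ℝ} {t m : ℕ}

lemma binCdf_eq_sum_binomTerm (k : ℕ) : binCdf k m p = ∑ i ∈ range (k + 1), binomTerm p m i := rfl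

lemma binCdf_add_binomTail {k : ℕ} (h : k ≤ m) : binCdf k m p + binomTail p (k + 1) m = 1 := by
  rw [binCdf_eq_sum_binomTerm, binomTail, range_eq_Ico,
    sum_Ico_consecutive _ (Nat.zero_le _) (by omega), ← range_eq_Ico, sum_range_binomTerm]

lemma binomTail_eq_binomTerm_add : binomTail p t m = binomTerm p m t + binomTail p (t + 1) m := by
  rcases le_or_gt t m with h | h
  · exact sum_eq_sum_Ico_succ_bot (by omega) _
  · simp [binomTail, binomTerm_eq_zero_of_lt h, Ico_eq_empty_of_le, h, h.le]

lemma binomTail_antitone (hp0 : 0 ≤ p) (hp1 : p ≤ 1) {t' : ℕ} (h : t ≤ t') :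
    binomTail p t' m ≤ binomTail p t m :=
  sum_le_sum_of_subset_of_nonneg (Ico_subset_Ico h le_rfl)
    fun _ _ _ => binomTerm_nonneg hp0 hp1

lemma binomTail_eq_binCdf_one_sub {k : ℕ} (h : k ≤ m) :
    binomTail p (m - k) m = binCdf k m (1 - p) := by
  have hreflect := sum_Ico_reflect (binomTerm p m) 0 (by omega : k + 1 ≤ m + 1)
  rw [show m + 1 - (k + 1) = m - k by omega, Nat.sub_zero] at hreflect
  rw [binomTail, ← hreflect, binCdf_eq_sum_binomTerm, range_eq_Ico]
  exact sum_congr rfl fun i hi => binomTerm_sub_eq (by simp at hi; omega)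

lemma binomTail_succ_succ :
    binomTail p (t + 1) (m + 1) = p * binomTail p t m + (1 - p) * binomTail p (t + 1) m := by
  have hshift : binomTail p (t + 1) (m + 1) = ∑ i ∈ Ico t (m + 1), binomTerm p (m + 1) (i + 1) := by
    rw [binomTail, sum_Ico_add']
  have hlast : ∑ i ∈ Ico t (m + 1), binomTerm p m (i + 1) = binomTail p (t + 1) m := by
    rw [sum_Ico_add', binomTail]
    refine (sum_subset (Ico_subset_Ico le_rfl (Nat.le_succ _)) fun i hi hi' => ?_).symm
    exact binomTerm_eq_zero_of_lt (by simp at hi hi'; omega)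
  rw [hshift]
  simp only [binomTerm_succ_succ, sum_add_distrib, ← mul_sum, hlast]
  rfl

lemma binomTail_le_binomTail_succ (hp0 : 0 ≤ p) (hp1 : p ≤ 1) :
    binomTail p (t + 1) m ≤ binomTail p (t + 1) (m + 1) := by
  rw [binomTail_succ_succ]
  nlinarith [binomTail_antitone (m := m) hp0 hp1 (Nat.le_succ t)]

end BinomTail

lemma binCdf_one_sub_le {p : ℝ} {k m : ℕ} (hp0 : 0 ≤ p) (hp : p ≤ 1 / 2) (h : 2 * k ≤ m) :
    binCdf k m (1 - p) ≤ binCdf k m p := by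
  simp only [binCdf_eq_sum_binomTerm]
  exact sum_le_sum fun i hi => binomTerm_one_sub_le hp0 hp (by simp at hi; omega)

lemma one_half_lt_of_binCdf_le {p : ℝ} (n : ℕ) (hp0 : 0 ≤ p)
    (h : binCdf n (2 * n) p ≤ 1 / 2) : 1 / 2 < p := by
  by_contra! hp
  rcases hp0.eq_or_lt with rfl | hp_pos
  · have : binCdf n (2 * n) 0 = 1 := by simp [binCdf, sum_range_succ']
    linarith
  · have hq : 0 < 1 - p := by linarith
    have hC : (0 : ℝ) < (2 * n).choose n := by exact_mod_cast Nat.choose_pos (by omega)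
    have hmid : 0 < binomTerm p (2 * n) n := by unfold binomTerm; positivity
    have hreflect : binomTail p n (2 * n) ≤ binCdf n (2 * n) p := by
      have := binomTail_eq_binCdf_one_sub (p := p) (show n ≤ 2 * n by omega)
      rw [show 2 * n - n = n by omega] at this
      exact this ▸ binCdf_one_sub_le hp0 hp le_rfl
    rw [binomTail_eq_binomTerm_add] at hreflect
    linarith [binCdf_add_binomTail (p := p) (show n ≤ 2 * n by omega)]

lemma sq_one_sub_mul_binomTerm_le {p : ℝ} (hp : 1 / 2 ≤ p) (hp1 : p ≤ 1) (n : ℕ) :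
    (1 - p) ^ 2 * binomTerm p (2 * n) (n + 1) ≤ p ^ 2 * binomTerm p (2 * n) n := by
  rcases n with _ | n
  · simpa [binomTerm] using sq_nonneg p
  have hC : ((2 * (n + 1)).choose (n + 2) : ℝ) ≤ (2 * (n + 1)).choose (n + 1) := by
    have := Nat.choose_le_middle (n + 2) (2 * (n + 1))
    rw [Nat.mul_div_cancel_left _ two_pos] at this
    exact_mod_cast this
  have hq : 0 ≤ 1 - p := by linarith
  have hX : 0 ≤ p ^ (n + 2) * (1 - p) ^ (n + 1) := by positivity
  calc (1 - p) ^ 2 * binomTerm p (2 * (n + 1)) (n + 1 + 1)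
      = ((2 * (n + 1)).choose (n + 2) * (1 - p)) * (p ^ (n + 2) * (1 - p) ^ (n + 1)) := by
        simp only [binomTerm, show 2 * (n + 1) - (n + 1 + 1) = n by omega]; ring
    _ ≤ ((2 * (n + 1)).choose (n + 1) * p) * (p ^ (n + 2) * (1 - p) ^ (n + 1)) := by
        gcongr; linarith
    _ = p ^ 2 * binomTerm p (2 * (n + 1)) (n + 1) := by
        simp only [binomTerm, show 2 * (n + 1) - (n + 1) = n + 1 by omega]; ring

lemma binomTail_two_mul_le {p : ℝ} (hp : 1 / 2 ≤ p) (hp1 : p ≤ 1) (m : ℕ) :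
    binomTail p (m + 1) (2 * m) ≤ binomTail p (m + 2) (2 * (m + 1)) := by
  rw [show 2 * (m + 1) = 2 * m + 1 + 1 by omega, binomTail_succ_succ, binomTail_succ_succ,
    binomTail_succ_succ, binomTail_eq_binomTerm_add (t := m) (m := 2 * m),
    binomTail_eq_binomTerm_add (t := m + 1) (m := 2 * m)]
  nlinarith [sq_one_sub_mul_binomTerm_le hp hp1 m]

lemma binomTail_two_mul_le_of_le {p : ℝ} (hp : 1 / 2 ≤ p) (hp1 : p ≤ 1) {n M : ℕ}
    (hM : 2 * n ≤ M) : binomTail p (n + 1) (2 * n) ≤ binomTail p (M / 2 + 1) M := by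
  have hmono : Monotone fun m => binomTail p (m + 1) (2 * m) :=
    monotone_nat_of_le_succ (binomTail_two_mul_le hp hp1)
  obtain ⟨m, rfl | rfl⟩ := Nat.even_or_odd' M
  · rw [Nat.mul_div_cancel_left _ two_pos]
    exact hmono (show n ≤ m by omega)
  · rw [show (2 * m + 1) / 2 = m by omega]
    exact (hmono (show n ≤ m by omega)).trans (binomTail_le_binomTail_succ (by linarith) hp1)

theorem robust_for_larger_ensembles_general (N : ℕ) (hNeven : Even N)
    (α : ℝ) (hα1 : α ≤ 1 / 2)
    (p : ℝ) (hp0 : 0 ≤ p) (hp1 : p ≤ 1) (h : gN N p ≤ α) :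
    ∀ M : ℕ, N ≤ M →
      1 - α ≤
        ∑ i ∈ (Finset.range (M + 1)).filter (fun i => M ≤ 2 * i),
          (M.choose i : ℝ) * p ^ i * (1 - p) ^ (M - i) := by
  intro M hM
  obtain ⟨n, rfl⟩ := hNeven.two_dvd
  rw [gN, Nat.mul_div_cancel_left _ two_pos] at h
  have hp : 1 / 2 < p := one_half_lt_of_binCdf_le n hp0 (h.trans hα1)
  have hmajority : filter (fun i => M ≤ 2 * i) (range (M + 1)) = Ico ((M + 1) / 2) (M + 1) := by
    ext i; simp only [mem_filter, mem_range, mem_Ico]; omega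
  calc 1 - α ≤ binomTail p (n + 1) (2 * n) := by
        linarith [binCdf_add_binomTail (p := p) (show n ≤ 2 * n by omega)]
    _ ≤ binomTail p (M / 2 + 1) M := binomTail_two_mul_le_of_le hp.le hp1 hM
    _ ≤ binomTail p ((M + 1) / 2) M := binomTail_antitone hp0 hp1 (by omega)
    _ = _ := by rw [hmajority]; rfl

theorem robust_for_larger_ensembles (N : ℕ) (hN : 2 ≤ N) (hNeven : Even N)
    (α : ℝ) (hα0 : 0 ≤ α) (hα1 : α ≤ 1 / 2)
    (p : ℝ) (hp0 : 0 ≤ p) (hp1 : p ≤ 1) (h : gN N p ≤ α) :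
    ∀ M : ℕ, N ≤ M →
      1 - α ≤
        ∑ i ∈ (Finset.range (M + 1)).filter (fun i => M ≤ 2 * i),
          (M.choose i : ℝ) * p ^ i * (1 - p) ^ (M - i) :=
  robust_for_larger_ensembles_general N hNeven α hα1 p hp0 hp1 h
end
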